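/- arXiv:1710.11241 — 5 statements merged into one kernel-verified Lean document; each statement's English description precedes it below -/
import Mathlib

section
/- Let h : ℝ → ℝ be differentiable, let (u^i, v^i) ∈ ℝ^d × ℝ for i = 1,…,N be data, let W ∈ ℝ^{n×d} and θ ∈ ℝ^n. Define the matrix D ∈ ℝ^{nd×N} whose i-th column is the vectorization of the n×d matrix with (j,k)-entry h'(W[j,:]·u^i)·θ[j]·u^i[k], and define s ∈ ℝ^N by s_i = v^i − θ^T h(W u^i) (h applied entrywise). If D has full column rank (rank N) and the first-order optimality condition ∇_W f(W,θ) = 0 holds, then s = 0; consequently f(W,θ) = 0, which is the global minimum of the nonnegative objective f. -/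
open Matrix MeasureTheory

/-- The two-layer neural network training objective
`f(W,θ) = (1/(2N)) ∑ᵢ (vⁱ − θᵀ h(W uⁱ))²`. -/
noncomputable def nnObj {n d N : ℕ} (h : ℝ → ℝ) (u : Fin N → Fin d → ℝ) (v : Fin N → ℝ)
    (W : Matrix (Fin n) (Fin d) ℝ) (θ : Fin n → ℝ) : ℝ :=
  (1 / (2 * N)) * ∑ i, (v i - ∑ j, θ j * h ((W *ᵥ u i) j)) ^ 2

theorem stmt0 {n d N : ℕ} (hN : 0 < N) (h : ℝ → ℝ) (hdiff : Differentiable ℝ h)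
    (u : Fin N → Fin d → ℝ) (v : Fin N → ℝ)
    (W : Matrix (Fin n) (Fin d) ℝ) (θ : Fin n → ℝ)
    (D : Matrix (Fin n × Fin d) (Fin N) ℝ)
    (hD : ∀ j k i, D (j, k) i = deriv h ((W *ᵥ u i) j) * θ j * u i k)
    (s : Fin N → ℝ)
    (hs : ∀ i, s i = v i - ∑ j, θ j * h ((W *ᵥ u i) j))
    (hrank : D.rank = N)
    (hgrad : ∀ j k, (-(1 : ℝ) / N) * ∑ i,
      (v i - ∑ j', θ j' * h ((W *ᵥ u i) j')) * deriv h ((W *ᵥ u i) j) * θ j * u i k = 0) :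
    s = 0 ∧ nnObj h u v W θ = 0 ∧
      ∀ (W' : Matrix (Fin n) (Fin d) ℝ) (θ' : Fin n → ℝ),
        nnObj h u v W θ ≤ nnObj h u v W' θ' := by
  have hNne : (N : ℝ) ≠ 0 := Nat.cast_ne_zero.mpr hN.ne'
  -- D *ᵥ s = 0
  have hDs : D *ᵥ s = 0 := by
    funext jk
    obtain ⟨j, k⟩ := jk
    have h1 := hgrad j k
    have h2 : ∑ i, (v i - ∑ j', θ j' * h ((W *ᵥ u i) j')) * deriv h ((W *ᵥ u i) j) * θ j
        * u i k = 0 := (mul_eq_zero.mp h1).resolve_left (by simp [hNne])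
    simp only [Matrix.mulVec, dotProduct, Pi.zero_apply]
    rw [← h2]
    refine Finset.sum_congr rfl fun i _ => ?_
    rw [hD, hs]
    ring
  -- kernel is trivial
  have hker : s = 0 := by
    have hfr : Module.finrank ℝ (LinearMap.range D.mulVecLin) = N := hrank
    have h3 := LinearMap.finrank_range_add_finrank_ker D.mulVecLin
    rw [hfr] at h3
    simp only [Module.finrank_fintype_fun_eq_card, Fintype.card_fin] at h3
    have hk0 : Module.finrank ℝ (LinearMap.ker D.mulVecLin) = 0 := by omega
    have hkbot : LinearMap.ker D.mulVecLin = ⊥ := Submodule.finrank_eq_zero.mp hk0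
    exact Matrix.ker_mulVecLin_eq_bot_iff.mp hkbot s hDs
  refine ⟨hker, ?_, ?_⟩
  · have : ∀ i, v i - ∑ j, θ j * h ((W *ᵥ u i) j) = 0 := fun i => by
      rw [← hs i, hker]; rfl
    unfold nnObj
    rw [Finset.sum_eq_zero fun i _ => by rw [this i]; ring]
    ring
  · intro W' θ'
    have hzero : nnObj h u v W θ = 0 := by
      have : ∀ i, v i - ∑ j, θ j * h ((W *ᵥ u i) j) = 0 := fun i => by
        rw [← hs i, hker]; rfl
      unfold nnObj
      rw [Finset.sum_eq_zero fun i _ => by rw [this i]; ring]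
      ring
    rw [hzero]
    unfold nnObj
    positivity
end

section
/- The softplus function h(x) = ln(1 + e^x) satisfies condition C1: for every nonempty open interval (a,b) ⊆ ℝ, there is no constant c₁ ∈ ℝ with h'(x) = c₁ for all x ∈ (a,b), and there are no constants c₂, c₃ ∈ ℝ with (x + c₂)h'(x) + h(x) = c₃ for all x ∈ (a,b). -/
open Real

/-- Condition C1: on no open interval does `h` satisfy `h'(x) = c₁`, nor
`(x + c₂) h'(x) + h(x) = c₃`, for constants `c₁, c₂, c₃`. -/
def CondC1 (h : ℝ → ℝ) : Prop :=
  ∀ a b : ℝ, a < b →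
    (¬ ∃ c₁ : ℝ, ∀ x ∈ Set.Ioo a b, deriv h x = c₁) ∧
    (¬ ∃ c₂ c₃ : ℝ, ∀ x ∈ Set.Ioo a b, (x + c₂) * deriv h x + h x = c₃)

/-!
The derivative of the softplus function is the sigmoid `σ`, which is strictly increasing, so it
is constant on no interval. If `(x + c₂) σ(x) + log (1 + eˣ)` were constant on an interval, its
derivative `σ(x) (2 + (x + c₂)(1 - σ(x)))` would vanish there; since `1 - σ(x) = (1 + eˣ)⁻¹`,
this forces `x + 2 eˣ = -c₂ - 2`, again impossible for a strictly increasing function.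
-/

open Set

lemma Function.Injective.not_exists_forall_Ioo_eq {α β : Type*} [LinearOrder α]
    [DenselyOrdered α] {f : α → β} (hf : Function.Injective f) {a b : α} (hab : a < b) :
    ¬ ∃ c, ∀ x ∈ Ioo a b, f x = c := by
  rintro ⟨c, hc⟩
  obtain ⟨x, hax, hxb⟩ := exists_between hab
  obtain ⟨y, hxy, hyb⟩ := exists_between hxb
  exact hxy.ne (hf ((hc x ⟨hax, hxb⟩).trans (hc y ⟨hax.trans hxy, hyb⟩).symm))

lemma HasDerivAt.eq_zero_of_forall_Ioo_eq {f : ℝ → ℝ} {f' c a b x : ℝ} (hf : HasDerivAt f f' x)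
    (hc : ∀ y ∈ Ioo a b, f y = c) (hx : x ∈ Ioo a b) : f' = 0 :=
  hf.unique <| (hasDerivAt_const x c).congr_of_eventuallyEq <|
    Filter.eventually_of_mem (Ioo_mem_nhds hx.1 hx.2) hc

namespace Real

lemma one_sub_sigmoid (x : ℝ) : 1 - sigmoid x = (1 + exp x)⁻¹ := by
  rw [← sigmoid_neg, sigmoid_def, neg_neg]

lemma hasDerivAt_log_one_add_exp (x : ℝ) :
    HasDerivAt (fun x => log (1 + exp x)) (sigmoid x) x := by
  convert ((hasDerivAt_exp x).const_add 1).log (by positivity) using 1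
  rw [sigmoid_def, exp_neg]
  field_simp
  ring

lemma deriv_log_one_add_exp : deriv (fun x => log (1 + exp x)) = sigmoid :=
  funext fun x => (hasDerivAt_log_one_add_exp x).deriv

lemma hasDerivAt_add_mul_sigmoid_add_log_one_add_exp (c x : ℝ) :
    HasDerivAt (fun x => (x + c) * sigmoid x + log (1 + exp x))
      (sigmoid x * (2 + (x + c) * (1 - sigmoid x))) x := by
  refine ((((hasDerivAt_id' x).add_const c).mul (hasDerivAt_sigmoid x)).add
    (hasDerivAt_log_one_add_exp x)).congr_deriv ?_
  ring

lemma strictMono_add_two_mul_exp : StrictMono fun x => x + 2 * exp x :=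
  strictMono_id.add (exp_strictMono.const_mul two_pos)

end Real

/-- The softplus function `h(x) = ln(1 + eˣ)` satisfies condition C1. -/
theorem stmt7 : CondC1 (fun x : ℝ => Real.log (1 + Real.exp x)) := by
  intro a b hab
  simp only [deriv_log_one_add_exp]
  refine ⟨sigmoid_strictMono.injective.not_exists_forall_Ioo_eq hab, ?_⟩
  rintro ⟨c₂, c₃, hc⟩
  refine strictMono_add_two_mul_exp.injective.not_exists_forall_Ioo_eq hab ⟨-c₂ - 2, ?_⟩
  intro x hx
  have hderiv := (hasDerivAt_add_mul_sigmoid_add_log_one_add_exp c₂ x).eq_zero_of_forall_Ioo_eq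
    hc hx
  have hlin : 2 + (x + c₂) * (1 + exp x)⁻¹ = 0 := by
    rw [← one_sub_sigmoid]
    exact (mul_eq_zero.mp hderiv).resolve_left (sigmoid_pos x).ne'
  field_simp at hlin
  linarith
end

section
/- Let h : ℝ → ℝ be differentiable, let (u^i, v^i) ∈ ℝ^d × ℝ for i = 1,…,N be fixed data, let γ > 0, and let W ∈ ℝ^{d×d} be nonsingular. For θ ∈ ℝ^d define the gradient-descent update W⁺(θ) = W − γ·diag(θ)·∑_{i=1}^N (v^i − θ^T h(W u^i))·h'(W u^i)(u^i)^T, where diag(θ) is the diagonal matrix with entries θ[1],…,θ[d]. Then the set of θ ∈ ℝ^d for which W⁺(θ) is singular has d-dimensional Lebesgue measure zero. -/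
open Matrix MeasureTheory

open MvPolynomial in
theorem mv_null : ∀ {n : ℕ} (p : MvPolynomial (Fin n) ℝ),
    (∃ x, eval x p ≠ 0) → volume {x : Fin n → ℝ | eval x p = 0} = 0 := by
  intro n
  induction n with
  | zero =>
    rintro p ⟨x, hx⟩
    convert measure_empty
    · ext y
      simp only [Set.mem_setOf_eq, Set.mem_empty_iff_false, iff_false]
      have : y = x := Subsingleton.elim _ _
      rw [this]; exact hx
    · infer_instance
  | succ n ih =>
    rintro p ⟨x, hx⟩
    set q := finSuccEquiv ℝ n p with hq
    have key : ∀ z : Fin (n+1) → ℝ, eval z p =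
        Polynomial.eval (z 0) (Polynomial.map (eval (Fin.tail z)) q) := by
      intro z
      conv_lhs => rw [← Fin.cons_self_tail z]
      exact eval_eq_eval_mv_eval' (Fin.tail z) (z 0) p
    have hmapne : Polynomial.map (eval (Fin.tail x)) q ≠ 0 := by
      intro hcon
      rw [key x, hcon] at hx
      simp at hx
    have hex : ∃ k, (Polynomial.map (eval (Fin.tail x)) q).coeff k ≠ 0 := by
      by_contra hcon
      push_neg at hcon
      exact hmapne (Polynomial.ext fun k => by simpa using hcon k)
    obtain ⟨k, hk⟩ := hex
    rw [Polynomial.coeff_map] at hk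
    have hN : volume {s : Fin n → ℝ | eval s (q.coeff k) = 0} = 0 :=
      ih _ ⟨Fin.tail x, hk⟩
    set e := MeasurableEquiv.piFinSuccAbove (fun _ : Fin (n+1) => ℝ) 0 with he
    have hmp := measurePreserving_piFinSuccAbove (fun _ : Fin (n+1) => (volume : Measure ℝ)) 0
    set T : Set (ℝ × (Fin n → ℝ)) :=
      {z | ∑ j ∈ Finset.range (q.natDegree + 1), eval z.2 (q.coeff j) * z.1 ^ j = 0} with hT
    have hTmeas : MeasurableSet T := by
      have hc : Continuous fun z : ℝ × (Fin n → ℝ) =>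
          ∑ j ∈ Finset.range (q.natDegree + 1), eval z.2 (q.coeff j) * z.1 ^ j := by
        refine continuous_finset_sum _ (fun j _ => ?_)
        exact ((MvPolynomial.continuous_eval (q.coeff j)).comp continuous_snd).mul
          ((continuous_pow j).comp continuous_fst)
      exact hc.measurable (measurableSet_singleton 0)
    have hTeq : ∀ a : ℝ, ∀ s : Fin n → ℝ,
        ((a, s) ∈ T ↔ Polynomial.eval a (Polynomial.map (eval s) q) = 0) := by
      intro a s
      have hdeg : (Polynomial.map (eval s) q).natDegree < q.natDegree + 1 :=
        Nat.lt_succ_of_le (Polynomial.natDegree_map_le)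
      rw [hT, Set.mem_setOf_eq, Polynomial.eval_eq_sum_range' hdeg]
      simp [Polynomial.coeff_map]
    have hS : {x : Fin (n+1) → ℝ | eval x p = 0} = e ⁻¹' T := by
      ext z
      have : e z = (z 0, Fin.tail z) := rfl
      simp only [Set.mem_setOf_eq, Set.mem_preimage, this]
      rw [key z, hTeq]
    rw [hS, MeasureTheory.volume_pi]
    rw [hmp.measure_preimage hTmeas.nullMeasurableSet]
    have hswap := (Measure.measurePreserving_swap
      (μ := (volume : Measure (Fin n → ℝ))) (ν := (volume : Measure ℝ)))
    rw [← MeasureTheory.volume_pi]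
    rw [← hswap.measure_preimage hTmeas.nullMeasurableSet]
    rw [Measure.measure_prod_null (hTmeas.preimage measurable_swap)]
    have hNae : ∀ᵐ s : Fin n → ℝ, eval s (q.coeff k) ≠ 0 := by
      rw [MeasureTheory.ae_iff]
      simpa using hN
    filter_upwards [hNae] with s hs
    have hqs : Polynomial.map (eval s) q ≠ 0 := by
      intro hcon
      apply hs
      have := congrArg (fun r => Polynomial.coeff r k) hcon
      simpa [Polynomial.coeff_map] using this
    have hfin : Set.Finite {a : ℝ | (s, a).swap ∈ T} := by
      have : {a : ℝ | (s, a).swap ∈ T} ⊆ {a : ℝ | (Polynomial.map (eval s) q).IsRoot a} := by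
        intro a ha
        rw [Set.mem_setOf_eq] at ha ⊢
        exact (hTeq a s).mp ha
      exact (Polynomial.finite_setOf_isRoot hqs).subset this
    have : (Prod.mk s ⁻¹' (Prod.swap ⁻¹' T)) = {a : ℝ | (s, a).swap ∈ T} := rfl
    simp only [Pi.zero_apply]
    rw [this]
    exact hfin.measure_zero _

open MvPolynomial in
theorem poly_repr {d N : ℕ} (h : ℝ → ℝ)
    (u : Fin N → Fin d → ℝ) (v : Fin N → ℝ) (γ : ℝ)
    (W : Matrix (Fin d) (Fin d) ℝ) :
    ∃ p : MvPolynomial (Fin d) ℝ, ∀ θ : Fin d → ℝ, eval θ p =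
      (W - γ • (Matrix.diagonal θ *
        ∑ i, (v i - ∑ j, θ j * h ((W *ᵥ u i) j)) •
          Matrix.of (fun j k : Fin d => deriv h ((W *ᵥ u i) j) * u i k))).det := by
  refine ⟨∑ σ : Equiv.Perm (Fin d), (Equiv.Perm.sign σ : ℤ) •
      ∏ j, (C (W (σ j) j) - C γ * (X (σ j) *
        ∑ i, (C (v i) - ∑ l, X l * C (h ((W *ᵥ u i) l))) *
          C (deriv h ((W *ᵥ u i) (σ j)) * u i j))), fun θ => ?_⟩
  rw [Matrix.det_apply]
  rw [map_sum]
  refine Finset.sum_congr rfl (fun σ _ => ?_)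
  rw [map_zsmul, map_prod]
  congr 1
  refine Finset.prod_congr rfl (fun j _ => ?_)
  have hentry : (W - γ • (Matrix.diagonal θ *
        ∑ i, (v i - ∑ l, θ l * h ((W *ᵥ u i) l)) •
          Matrix.of (fun j k : Fin d => deriv h ((W *ᵥ u i) j) * u i k))) (σ j) j
      = W (σ j) j - γ * (θ (σ j) *
          ∑ i, (v i - ∑ l, θ l * h ((W *ᵥ u i) l)) *
            (deriv h ((W *ᵥ u i) (σ j)) * u i j)) := by
    simp [Matrix.sub_apply, Matrix.smul_apply, Matrix.diagonal_mul, Matrix.sum_apply,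
      smul_eq_mul, Matrix.of_apply]
  rw [hentry]
  simp [Finset.mul_sum]

theorem stmt10 {d N : ℕ} (h : ℝ → ℝ) (hdiff : Differentiable ℝ h)
    (u : Fin N → Fin d → ℝ) (v : Fin N → ℝ) (γ : ℝ) (hγ : 0 < γ)
    (W : Matrix (Fin d) (Fin d) ℝ) (hW : W.det ≠ 0) :
    volume {θ : Fin d → ℝ |
      (W - γ • (Matrix.diagonal θ *
        ∑ i, (v i - ∑ j, θ j * h ((W *ᵥ u i) j)) •
          Matrix.of (fun j k : Fin d => deriv h ((W *ᵥ u i) j) * u i k))).det = 0} = 0 := by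
  obtain ⟨p, hp⟩ := poly_repr h u v γ W
  have hset : {θ : Fin d → ℝ |
      (W - γ • (Matrix.diagonal θ *
        ∑ i, (v i - ∑ j, θ j * h ((W *ᵥ u i) j)) •
          Matrix.of (fun j k : Fin d => deriv h ((W *ᵥ u i) j) * u i k))).det = 0}
      = {θ : Fin d → ℝ | MvPolynomial.eval θ p = 0} := by
    ext θ
    simp only [Set.mem_setOf_eq, hp θ]
  rw [hset]
  refine mv_null p ⟨0, ?_⟩
  rw [hp 0]
  have : Matrix.diagonal (0 : Fin d → ℝ) = 0 := Matrix.diagonal_zero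
  rw [this, Matrix.zero_mul, smul_zero, sub_zero]
  exact hW
end

section
/- Let h : ℝ → ℝ be twice differentiable with |h(x)| ≤ M₀, |h'(x)| ≤ M₁ and |h''(x)| ≤ M₂ for all x, so that h' is Lipschitz with constant L_{h'} = M₂ and the map H(x₁,x₂) = h(x₁)h'(x₂) has gradient bounded by some constant L_{hh'}. Fix data (u^i, v^i) ∈ ℝ^d × ℝ, i = 1,…,N, and θ ∈ ℝ^d, and let f(W,θ) = (1/(2N)) ∑_{i=1}^N (v^i − θ^T h(W u^i))². Then for all W₁, W₂ ∈ ℝ^{d×d}, ‖∇_W f(W₁,θ) − ∇_W f(W₂,θ)‖_F ≤ L·‖W₁ − W₂‖_F, where L = (1/N)·(max_j |θ[j]|)·( L_{h'}·∑_{i=1}^N ‖u^i‖₂²·|v^i| + √(2d)·L_{hh'}·‖θ‖₂·∑_{i=1}^N ‖u^i‖₂² ). -/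
open Matrix MeasureTheory

/-- Frobenius norm of a real matrix. -/
noncomputable def frobNorm {m n : ℕ} (A : Matrix (Fin m) (Fin n) ℝ) : ℝ :=
  Real.sqrt (∑ j, ∑ k, (A j k) ^ 2)

/-- Euclidean norm of a vector in ℝ^n. -/
noncomputable def vecNorm {n : ℕ} (x : Fin n → ℝ) : ℝ :=
  Real.sqrt (∑ j, (x j) ^ 2)

/-- Gradient of the two-layer objective `f(W,θ) = (1/(2N)) ∑ᵢ (vⁱ − θᵀ h(W uⁱ))²`
with respect to the hidden layer `W`. -/
noncomputable def gradW {d N : ℕ} (h : ℝ → ℝ) (u : Fin N → Fin d → ℝ) (v : Fin N → ℝ)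
    (W : Matrix (Fin d) (Fin d) ℝ) (θ : Fin d → ℝ) : Matrix (Fin d) (Fin d) ℝ :=
  Matrix.of fun j k => (-(1 : ℝ) / N) * ∑ i,
    (v i - ∑ j', θ j' * h ((W *ᵥ u i) j')) * deriv h ((W *ᵥ u i) j) * θ j * u i k

/-!
The gradient difference is `-(1/N) diag(θ) ∑ᵢ (eᵢ(W₁) - eᵢ(W₂)) uⁱᵀ`, where `eᵢ(W)` is the error
`(vⁱ - θᵀ h(a)) h'(a)` backpropagated to the hidden preactivations `a = W uⁱ`; its Frobenius norm is
therefore at most `(1/N) maxⱼ |θⱼ| ∑ᵢ ‖eᵢ(W₁) - eᵢ(W₂)‖ ‖uⁱ‖`. For preactivations `a`, `b` the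
difference `e(a) - e(b)` splits into `v (h'(a) - h'(b))`, of norm at most `M₂ |v| ‖a - b‖`, and
`Q θ` with `Q_{jj'} = h(a_{j'}) h'(a_j) - h(b_{j'}) h'(b_j)`. The mean value inequality for
`(x, y) ↦ h(x) h'(y)` bounds each entry of `Q` by `L_{hh'} √((a_{j'} - b_{j'})² + (a_j - b_j)²)`,
so `‖Q θ‖ ≤ ‖Q‖_F ‖θ‖ ≤ √(2d) L_{hh'} ‖a - b‖ ‖θ‖`. Finally `‖(W₁ - W₂) uⁱ‖ ≤ ‖W₁ - W₂‖_F ‖uⁱ‖`.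
-/

section Norms

variable {m n : ℕ}

theorem vecNorm_eq_norm (x : Fin n → ℝ) : vecNorm x = ‖WithLp.toLp 2 x‖ := by
  simp [vecNorm, EuclideanSpace.norm_eq]

theorem vecNorm_nonneg (x : Fin n → ℝ) : 0 ≤ vecNorm x := Real.sqrt_nonneg _

theorem vecNorm_sub_le (x y : Fin n → ℝ) : vecNorm (x - y) ≤ vecNorm x + vecNorm y := by
  simpa only [vecNorm_eq_norm, WithLp.toLp_sub] using norm_sub_le _ _

theorem sq_le_mul_sq_of_abs_le {a b c : ℝ} (hc : 0 ≤ c) (h : |a| ≤ c * |b|) :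
    a ^ 2 ≤ c ^ 2 * b ^ 2 := by
  rw [← mul_pow]
  exact sq_le_sq.mpr (by rwa [abs_mul, abs_of_nonneg hc])

theorem vecNorm_le_of_abs_le {x y : Fin n → ℝ} {c : ℝ} (hc : 0 ≤ c)
    (hxy : ∀ j, |x j| ≤ c * |y j|) : vecNorm x ≤ c * vecNorm y := by
  have hsum : ∑ j, x j ^ 2 ≤ c ^ 2 * ∑ j, y j ^ 2 := by
    rw [Finset.mul_sum]
    exact Finset.sum_le_sum fun j _ => sq_le_mul_sq_of_abs_le hc (hxy j)
  calc vecNorm x ≤ √(c ^ 2 * ∑ j, y j ^ 2) := Real.sqrt_le_sqrt hsum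
    _ = c * vecNorm y := by rw [Real.sqrt_mul (sq_nonneg c), Real.sqrt_sq hc, vecNorm]

theorem frobNorm_le_of_abs_le {A B : Matrix (Fin m) (Fin n) ℝ} {c : ℝ} (hc : 0 ≤ c)
    (hAB : ∀ j k, |A j k| ≤ c * |B j k|) : frobNorm A ≤ c * frobNorm B := by
  have hsum : ∑ j, ∑ k, A j k ^ 2 ≤ c ^ 2 * ∑ j, ∑ k, B j k ^ 2 := by
    simp only [Finset.mul_sum]
    exact Finset.sum_le_sum fun j _ => Finset.sum_le_sum fun k _ =>
      sq_le_mul_sq_of_abs_le hc (hAB j k)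
  calc frobNorm A ≤ √(c ^ 2 * ∑ j, ∑ k, B j k ^ 2) := Real.sqrt_le_sqrt hsum
    _ = c * frobNorm B := by rw [Real.sqrt_mul (sq_nonneg c), Real.sqrt_sq hc, frobNorm]

section Frobenius

attribute [local instance] Matrix.frobeniusNormedAddCommGroup

theorem frobNorm_eq_norm (A : Matrix (Fin m) (Fin n) ℝ) : frobNorm A = ‖A‖ := by
  simp [frobNorm, frobenius_norm_def, Real.sqrt_eq_rpow]

theorem frobNorm_sum_le {ι : Type*} (s : Finset ι) (A : ι → Matrix (Fin m) (Fin n) ℝ) :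
    frobNorm (∑ i ∈ s, A i) ≤ ∑ i ∈ s, frobNorm (A i) := by
  simpa only [frobNorm_eq_norm] using norm_sum_le s A

end Frobenius

theorem frobNorm_vecMulVec (x : Fin m → ℝ) (y : Fin n → ℝ) :
    frobNorm (vecMulVec x y) = vecNorm x * vecNorm y := by
  rw [frobNorm, vecNorm, vecNorm, ← Real.sqrt_mul (by positivity), Finset.sum_mul_sum]
  simp only [vecMulVec_apply, mul_pow]

theorem vecNorm_mulVec_le (A : Matrix (Fin m) (Fin n) ℝ) (x : Fin n → ℝ) :
    vecNorm (A *ᵥ x) ≤ frobNorm A * vecNorm x := by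
  rw [vecNorm, frobNorm, vecNorm, ← Real.sqrt_mul (by positivity), Finset.sum_mul]
  exact Real.sqrt_le_sqrt (Finset.sum_le_sum fun j _ => by
    simpa only [mulVec, dotProduct] using Finset.sum_mul_sq_le_sq_mul_sq _ (A j) x)

theorem frobNorm_sqrt_sq_add_sq (x : Fin n → ℝ) :
    frobNorm (of fun j k => √(x k ^ 2 + x j ^ 2)) = √(2 * n) * vecNorm x := by
  have hsum : ∑ j, ∑ k, √(x k ^ 2 + x j ^ 2) ^ 2 = 2 * n * ∑ j, x j ^ 2 := by
    simp only [Real.sq_sqrt (add_nonneg (sq_nonneg _) (sq_nonneg _)), Finset.sum_add_distrib,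
      Finset.sum_const, Finset.card_univ, Fintype.card_fin, nsmul_eq_mul, ← Finset.mul_sum]
    ring
  rw [frobNorm, vecNorm, ← Real.sqrt_mul (by positivity)]
  simpa only [of_apply] using congrArg Real.sqrt hsum

end Norms

theorem abs_mul_add_mul_le (a b x y : ℝ) :
    |a * x + b * y| ≤ √(a ^ 2 + b ^ 2) * √(x ^ 2 + y ^ 2) := by
  rw [← Real.sqrt_mul (by positivity), ← Real.sqrt_sq_eq_abs]
  exact Real.sqrt_le_sqrt (by nlinarith [sq_nonneg (a * y - b * x)])

theorem abs_sub_le_of_abs_deriv_le {f : ℝ → ℝ} (hf : Differentiable ℝ f) {C : ℝ}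
    (hC : ∀ x, |deriv f x| ≤ C) (a b : ℝ) : |f a - f b| ≤ C * |a - b| :=
  Convex.norm_image_sub_le_of_norm_deriv_le (fun x _ => hf x) (fun x _ => hC x) convex_univ
    (Set.mem_univ b) (Set.mem_univ a)

theorem abs_mul_sub_mul_le {f g : ℝ → ℝ} (hf : Differentiable ℝ f) (hg : Differentiable ℝ g)
    {L : ℝ} (hL : ∀ x y, √((deriv f x * g y) ^ 2 + (f x * deriv g y) ^ 2) ≤ L)
    (x₁ y₁ x₂ y₂ : ℝ) :
    |f x₁ * g y₁ - f x₂ * g y₂| ≤ L * √((x₁ - x₂) ^ 2 + (y₁ - y₂) ^ 2) := by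
  set dx := x₁ - x₂
  set dy := y₁ - y₂
  let φ : ℝ → ℝ := fun t => f (x₂ + t * dx) * g (y₂ + t * dy)
  have hφ : ∀ t, HasDerivAt φ (deriv f (x₂ + t * dx) * g (y₂ + t * dy) * dx +
      f (x₂ + t * dx) * deriv g (y₂ + t * dy) * dy) t := by
    intro t
    have hx := (hf _).hasDerivAt.comp t ((hasDerivAt_mul_const dx).const_add x₂)
    have hy := (hg _).hasDerivAt.comp t ((hasDerivAt_mul_const dy).const_add y₂)
    exact (hx.mul hy).congr_deriv (by simp only [Function.comp_apply]; ring)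
  have hbound : ∀ t, |deriv φ t| ≤ L * √(dx ^ 2 + dy ^ 2) := fun t => by
    rw [(hφ t).deriv]
    exact (abs_mul_add_mul_le _ _ _ _).trans
      (mul_le_mul_of_nonneg_right (hL _ _) (Real.sqrt_nonneg _))
  have := abs_sub_le_of_abs_deriv_le (fun t => (hφ t).differentiableAt) hbound 1 0
  simpa [φ, dx, dy] using this

noncomputable def hiddenError {d : ℕ} (h : ℝ → ℝ) (θ : Fin d → ℝ) (v : ℝ) (a : Fin d → ℝ) :
    Fin d → ℝ :=
  fun j => (v - ∑ j', θ j' * h (a j')) * deriv h (a j)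

section HiddenError

variable {d : ℕ} {h : ℝ → ℝ} (θ : Fin d → ℝ) (v : ℝ)

theorem hiddenError_sub (a b : Fin d → ℝ) :
    hiddenError h θ v a - hiddenError h θ v b =
      v • (fun j => deriv h (a j) - deriv h (b j)) -
        (of fun j j' => h (a j') * deriv h (a j) - h (b j') * deriv h (b j)) *ᵥ θ := by
  ext j
  simp only [hiddenError, Pi.sub_apply, Pi.smul_apply, smul_eq_mul, mulVec, dotProduct, of_apply,
    sub_mul, Finset.sum_mul, mul_sub]
  rw [sub_sub_sub_comm, ← Finset.sum_sub_distrib]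
  exact congrArg _ (Finset.sum_congr rfl fun _ _ => by ring)

theorem vecNorm_hiddenError_sub_le (hd1 : Differentiable ℝ h) (hd2 : Differentiable ℝ (deriv h))
    {M₂ Lhh : ℝ} (hb2 : ∀ x, |deriv (deriv h) x| ≤ M₂)
    (hLhh : ∀ x₁ x₂ : ℝ,
      √((deriv h x₁ * deriv h x₂) ^ 2 + (h x₁ * deriv (deriv h) x₂) ^ 2) ≤ Lhh)
    (a b : Fin d → ℝ) :
    vecNorm (hiddenError h θ v a - hiddenError h θ v b) ≤
      (M₂ * |v| + √(2 * d) * Lhh * vecNorm θ) * vecNorm (a - b) := by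
  have hM₂ : 0 ≤ M₂ := (abs_nonneg _).trans (hb2 0)
  have hLhh_nonneg : 0 ≤ Lhh := (Real.sqrt_nonneg _).trans (hLhh 0 0)
  have hlinear : vecNorm (v • fun j => deriv h (a j) - deriv h (b j)) ≤
      M₂ * |v| * vecNorm (a - b) :=
    vecNorm_le_of_abs_le (by positivity) fun j => by
      rw [Pi.smul_apply, smul_eq_mul, abs_mul, Pi.sub_apply, mul_comm M₂, mul_assoc]
      exact mul_le_mul_of_nonneg_left (abs_sub_le_of_abs_deriv_le hd2 hb2 _ _) (abs_nonneg v)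
  have hquadratic :
      frobNorm (of fun j j' => h (a j') * deriv h (a j) - h (b j') * deriv h (b j)) ≤
        Lhh * (√(2 * d) * vecNorm (a - b)) := by
    rw [← frobNorm_sqrt_sq_add_sq]
    refine frobNorm_le_of_abs_le hLhh_nonneg fun j j' => ?_
    simp only [of_apply, Pi.sub_apply, abs_of_nonneg (Real.sqrt_nonneg _)]
    exact abs_mul_sub_mul_le hd1 hd2 hLhh _ _ _ _
  rw [hiddenError_sub]
  calc _ ≤ _ := vecNorm_sub_le _ _
    _ ≤ M₂ * |v| * vecNorm (a - b) + Lhh * (√(2 * d) * vecNorm (a - b)) * vecNorm θ :=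
      add_le_add hlinear ((vecNorm_mulVec_le _ _).trans
        (mul_le_mul_of_nonneg_right hquadratic (vecNorm_nonneg θ)))
    _ = _ := by ring

end HiddenError

section Gradient

variable {d N : ℕ} (h : ℝ → ℝ) (u : Fin N → Fin d → ℝ) (v : Fin N → ℝ) (θ : Fin d → ℝ)

theorem frobNorm_gradW_sub_le (W₁ W₂ : Matrix (Fin d) (Fin d) ℝ) :
    frobNorm (gradW h u v W₁ θ - gradW h u v W₂ θ) ≤
      1 / N * (⨆ j, |θ j|) * ∑ i, vecNorm (hiddenError h θ (v i) (W₁ *ᵥ u i) -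
        hiddenError h θ (v i) (W₂ *ᵥ u i)) * vecNorm (u i) := by
  set E := ∑ i, vecMulVec (hiddenError h θ (v i) (W₁ *ᵥ u i) -
    hiddenError h θ (v i) (W₂ *ᵥ u i)) (u i)
  have hentry : ∀ j k, (gradW h u v W₁ θ - gradW h u v W₂ θ) j k = -(1 / N) * θ j * E j k := by
    intro j k
    simp only [E, gradW, hiddenError, Matrix.sub_apply, of_apply, Matrix.sum_apply,
      vecMulVec_apply, Pi.sub_apply, ← mul_sub, ← Finset.sum_sub_distrib, Finset.mul_sum]
    exact Finset.sum_congr rfl fun i _ => by ring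
  have hT : 0 ≤ 1 / (N : ℝ) * ⨆ j, |θ j| :=
    mul_nonneg (by positivity) (Real.iSup_nonneg fun j => abs_nonneg _)
  calc _ ≤ 1 / N * (⨆ j, |θ j|) * frobNorm E :=
        frobNorm_le_of_abs_le hT fun j k => by
          rw [hentry, abs_mul, abs_mul, abs_neg, abs_of_nonneg (by positivity)]
          gcongr
          exact le_ciSup (f := fun j => |θ j|) (Finite.bddAbove_range _) j
    _ ≤ _ := by
      gcongr
      refine (frobNorm_sum_le _ _).trans_eq ?_
      simp only [frobNorm_vecMulVec]

end Gradient

theorem stmt11_general {d N : ℕ} (h : ℝ → ℝ)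
    (hd1 : Differentiable ℝ h) (hd2 : Differentiable ℝ (deriv h))
    (M₂ Lhh : ℝ)
    (hb2 : ∀ x, |deriv (deriv h) x| ≤ M₂)
    (hLhh : ∀ x₁ x₂ : ℝ,
      Real.sqrt ((deriv h x₁ * deriv h x₂) ^ 2 + (h x₁ * deriv (deriv h) x₂) ^ 2) ≤ Lhh)
    (u : Fin N → Fin d → ℝ) (v : Fin N → ℝ) (θ : Fin d → ℝ)
    (W₁ W₂ : Matrix (Fin d) (Fin d) ℝ) :
    frobNorm (gradW h u v W₁ θ - gradW h u v W₂ θ) ≤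
      ((1 : ℝ) / N) * (⨆ j, |θ j|) *
        (M₂ * ∑ i, (vecNorm (u i)) ^ 2 * |v i| +
          Real.sqrt (2 * d) * Lhh * vecNorm θ * ∑ i, (vecNorm (u i)) ^ 2) *
        frobNorm (W₁ - W₂) := by
  have hM₂ : 0 ≤ M₂ := (abs_nonneg _).trans (hb2 0)
  have hLhh_nonneg : 0 ≤ Lhh := (Real.sqrt_nonneg _).trans (hLhh 0 0)
  have hT : 0 ≤ 1 / (N : ℝ) * ⨆ j, |θ j| :=
    mul_nonneg (by positivity) (Real.iSup_nonneg fun j => abs_nonneg _)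
  calc _ ≤ _ := frobNorm_gradW_sub_le h u v θ W₁ W₂
    _ ≤ 1 / N * (⨆ j, |θ j|) * ∑ i, (M₂ * |v i| + √(2 * d) * Lhh * vecNorm θ) *
          (frobNorm (W₁ - W₂) * vecNorm (u i)) * vecNorm (u i) := by
      gcongr with i
      · exact vecNorm_nonneg _
      refine (vecNorm_hiddenError_sub_le θ (v i) hd1 hd2 hb2 hLhh _ _).trans ?_
      rw [← sub_mulVec]
      gcongr
      · have := vecNorm_nonneg θ
        positivity
      exact vecNorm_mulVec_le _ _
    _ = _ := by
      simp only [Finset.mul_sum, Finset.sum_mul, ← Finset.sum_add_distrib, mul_add, add_mul]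
      exact Finset.sum_congr rfl fun i _ => by ring

theorem stmt11 {d N : ℕ} (hN : 0 < N) (h : ℝ → ℝ)
    (hd1 : Differentiable ℝ h) (hd2 : Differentiable ℝ (deriv h))
    (M₀ M₁ M₂ Lhh : ℝ)
    (hb0 : ∀ x, |h x| ≤ M₀) (hb1 : ∀ x, |deriv h x| ≤ M₁)
    (hb2 : ∀ x, |deriv (deriv h) x| ≤ M₂)
    (hLhh : ∀ x₁ x₂ : ℝ,
      Real.sqrt ((deriv h x₁ * deriv h x₂) ^ 2 + (h x₁ * deriv (deriv h) x₂) ^ 2) ≤ Lhh)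
    (u : Fin N → Fin d → ℝ) (v : Fin N → ℝ) (θ : Fin d → ℝ)
    (W₁ W₂ : Matrix (Fin d) (Fin d) ℝ) :
    frobNorm (gradW h u v W₁ θ - gradW h u v W₂ θ) ≤
      ((1 : ℝ) / N) * (⨆ j, |θ j|) *
        (M₂ * ∑ i, (vecNorm (u i)) ^ 2 * |v i| +
          Real.sqrt (2 * d) * Lhh * vecNorm θ * ∑ i, (vecNorm (u i)) ^ 2) *
        frobNorm (W₁ - W₂) :=
  stmt11_general h hd1 hd2 M₂ Lhh hb2 hLhh u v θ W₁ W₂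
end

section
/- Let f : ℝ^d → ℝ be convex and differentiable with L-Lipschitz gradient (L > 0), let R ⊆ ℝ^d be a nonempty closed convex set, let θ ∈ R, let ξ ∈ ℝ^d, set G = ∇f(θ) + ξ, let 0 < β < 1/L, and let θ⁺ = argmin_{z ∈ R} ( β⟨G, z − θ⟩ + (1/2)‖z − θ‖₂² ). Then for every u ∈ R, β·f(θ⁺) ≤ β·f(u) + β⟨ξ, u − θ⟩ + (1/2)‖u − θ‖₂² − (1/2)‖u − θ⁺‖₂² + β²‖ξ‖₂² / (2(1 − Lβ)). -/
/-!
One step of the three-point argument for projected gradient descent. The minimality of `θ⁺`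
over the convex set `R` gives the variational inequality
`0 ≤ β⟪G, u - θ⁺⟫ + ⟪θ⁺ - θ, u - θ⁺⟫`, and the three-point identity turns `⟪θ⁺ - θ, u - θ⁺⟫`
into half-differences of squared distances. The descent lemma at `θ` and the first-order
convexity inequality between `θ` and `u` replace `⟪∇f θ, u - θ⁺⟫` by `f u - f θ⁺` up to
`L/2 ‖θ⁺ - θ‖²`; this leaves `(1 - Lβ)/2 ‖θ⁺ - θ‖²` in reserve, which absorbs the
cross term `-β⟪ξ, θ⁺ - θ⟫` by Young's inequality.
-/

open RealInnerProductSpace Set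

section Gradient

variable {E : Type*} [NormedAddCommGroup E] [InnerProductSpace ℝ E] [CompleteSpace E]
  {f : E → ℝ}

lemma hasDerivAt_comp_add_smul {x v : E} {t : ℝ} (hf : DifferentiableAt ℝ f (x + t • v)) :
    HasDerivAt (fun s : ℝ => f (x + s • v)) ⟪gradient f (x + t • v), v⟫ t := by
  have hline : HasDerivAt (fun s : ℝ => x + s • v) v t := by
    simpa using ((hasDerivAt_id t).smul_const v).const_add x
  simpa [InnerProductSpace.toDual_apply_apply, Function.comp_def] using
    hf.hasGradientAt.hasFDerivAt.comp_hasDerivAt t hline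

lemma ConvexOn.add_inner_gradient_le (hconv : ConvexOn ℝ univ f) {x : E}
    (hdiff : DifferentiableAt ℝ f x) (y : E) :
    f x + ⟪gradient f x, y - x⟫ ≤ f y := by
  have hline : ConvexOn ℝ univ (fun s : ℝ => f (x + s • (y - x))) := by
    simpa [Function.comp_def, AffineMap.lineMap_apply, add_comm] using
      hconv.comp_affineMap (AffineMap.lineMap x y : ℝ →ᵃ[ℝ] E)
  have hderiv : HasDerivAt (fun s : ℝ => f (x + s • (y - x))) ⟪gradient f x, y - x⟫ 0 := by
    simpa using hasDerivAt_comp_add_smul (v := y - x) (t := 0) (by simpa using hdiff)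
  have hslope := hline.le_slope_of_hasDerivAt (mem_univ 0) (mem_univ 1) one_pos hderiv
  simp only [slope_def_field, one_smul, zero_smul, add_zero, add_sub_cancel, sub_zero,
    div_one] at hslope
  linarith

lemma le_add_inner_gradient_add_sq_of_lipschitz {L : ℝ} (hdiff : Differentiable ℝ f)
    (hlip : ∀ x y, ‖gradient f x - gradient f y‖ ≤ L * ‖x - y‖) (x y : E) :
    f y ≤ f x + ⟪gradient f x, y - x⟫ + L / 2 * ‖y - x‖ ^ 2 := by
  set v := y - x
  -- `φ` is antitone on `[0, ∞)`, because the Lipschitz bound makes its derivative nonpositive.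
  set φ : ℝ → ℝ := fun t => f (x + t • v) - t * ⟪gradient f x, v⟫ - L / 2 * t ^ 2 * ‖v‖ ^ 2
  set φ' : ℝ → ℝ := fun t =>
    ⟪gradient f (x + t • v), v⟫ - ⟪gradient f x, v⟫ - L * t * ‖v‖ ^ 2
  have hφ (t : ℝ) : HasDerivAt φ (φ' t) t := by
    refine (((hasDerivAt_comp_add_smul (x := x) (v := v) (hdiff _)).sub
      ((hasDerivAt_id t).mul_const ⟪gradient f x, v⟫)).sub
      (((hasDerivAt_pow 2 t).const_mul (L / 2)).mul_const (‖v‖ ^ 2))).congr_deriv ?_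
    simp only [φ', Nat.cast_ofNat]
    ring
  have hφ'_nonpos (t : ℝ) (ht : 0 ≤ t) : φ' t ≤ 0 := by
    have hstep : ‖gradient f (x + t • v) - gradient f x‖ ≤ L * (t * ‖v‖) := by
      simpa [norm_smul, abs_of_nonneg ht] using hlip (x + t • v) x
    calc φ' t = ⟪gradient f (x + t • v) - gradient f x, v⟫ - L * t * ‖v‖ ^ 2 := by
          simp only [φ', inner_sub_left]
      _ ≤ ‖gradient f (x + t • v) - gradient f x‖ * ‖v‖ - L * t * ‖v‖ ^ 2 := by
          gcongr; exact real_inner_le_norm _ _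
      _ ≤ L * (t * ‖v‖) * ‖v‖ - L * t * ‖v‖ ^ 2 := by gcongr
      _ = 0 := by ring
  have hanti : AntitoneOn φ (Ici 0) :=
    antitoneOn_of_hasDerivWithinAt_nonpos (convex_Ici 0)
      (fun t _ => (hφ t).continuousAt.continuousWithinAt)
      (fun t _ => (hφ t).hasDerivWithinAt)
      (fun t ht => hφ'_nonpos t (le_of_lt (by simpa using ht)))
  have hφ01 := hanti (mem_Ici.2 le_rfl) (mem_Ici.2 zero_le_one) zero_le_one
  simp only [φ, v, one_smul, zero_smul, add_zero, add_sub_cancel] at hφ01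
  linarith

end Gradient

section Projection

variable {E : Type*} [NormedAddCommGroup E] [InnerProductSpace ℝ E]

/-- A minimiser `p` over `K` of `z ↦ ⟪g, z - x⟫ + ‖z - x‖² / 2` is the projection of `x - g`
onto `K`, whence the variational inequality. -/
lemma inner_add_sub_nonneg_of_isMinOn {K : Set E} (hK : Convex ℝ K) {g x p : E} (hp : p ∈ K)
    (hmin : IsMinOn (fun z => ⟪g, z - x⟫ + 1 / 2 * ‖z - x‖ ^ 2) K p) {u : E} (hu : u ∈ K) :
    0 ≤ ⟪g + (p - x), u - p⟫ := by
  have hsq (z : E) : ‖x - g - z‖ ^ 2 = 2 * (⟪g, z - x⟫ + 1 / 2 * ‖z - x‖ ^ 2) + ‖g‖ ^ 2 := by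
    rw [show x - g - z = -((z - x) + g) by abel, norm_neg, norm_add_sq_real, real_inner_comm]
    ring
  have : Nonempty K := ⟨⟨p, hp⟩⟩
  have hproj : ‖x - g - p‖ = ⨅ z : K, ‖x - g - z‖ := by
    refine le_antisymm (le_ciInf fun z => ?_)
      (ciInf_le (f := fun z : K => ‖x - g - z‖) ⟨0, ?_⟩ ⟨p, hp⟩)
    · refine (pow_le_pow_iff_left₀ (norm_nonneg _) (norm_nonneg _) two_ne_zero).1 ?_
      rw [hsq, hsq]
      linarith [isMinOn_iff.1 hmin z z.2]
    · rintro _ ⟨z, rfl⟩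
      positivity
  have hobtuse := (norm_eq_iInf_iff_real_inner_le_zero hK hp).1 hproj u hu
  rw [show x - g - p = -(g + (p - x)) by abel, inner_neg_left] at hobtuse
  linarith

end Projection

lemma mul_le_sq_div_add_mul_sq {c : ℝ} (hc : 0 < c) (a b : ℝ) :
    a * b ≤ a ^ 2 / (2 * c) + c / 2 * b ^ 2 := by
  have hgap : a ^ 2 / (2 * c) + c / 2 * b ^ 2 - a * b = (a - c * b) ^ 2 / (2 * c) := by
    field_simp
    ring
  linarith [show 0 ≤ (a - c * b) ^ 2 / (2 * c) by positivity]

theorem stmt18_general {d : ℕ} (f : EuclideanSpace ℝ (Fin d) → ℝ) (L : ℝ)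
    (hconv : ConvexOn ℝ Set.univ f) (hdiff : Differentiable ℝ f)
    (hlip : ∀ x y, ‖gradient f x - gradient f y‖ ≤ L * ‖x - y‖)
    (R : Set (EuclideanSpace ℝ (Fin d)))
    (hconvR : Convex ℝ R)
    (θ : EuclideanSpace ℝ (Fin d)) (ξ : EuclideanSpace ℝ (Fin d))
    (β : ℝ) (hβ1 : 0 < β) (hβ2 : β < 1 / L)
    (θp : EuclideanSpace ℝ (Fin d)) (hθp : θp ∈ R)
    (hmin : ∀ z ∈ R,
      β * ⟪gradient f θ + ξ, θp - θ⟫ + (1 / 2) * ‖θp - θ‖ ^ 2 ≤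
        β * ⟪gradient f θ + ξ, z - θ⟫ + (1 / 2) * ‖z - θ‖ ^ 2) :
    ∀ u ∈ R,
      β * f θp ≤ β * f u + β * ⟪ξ, u - θ⟫ + (1 / 2) * ‖u - θ‖ ^ 2 -
        (1 / 2) * ‖u - θp‖ ^ 2 + β ^ 2 * ‖ξ‖ ^ 2 / (2 * (1 - L * β)) := by
  intro u hu
  have hLβ : 0 < 1 - L * β := by
    have hL : 0 < L := one_div_pos.1 (hβ1.trans hβ2)
    rw [lt_div_iff₀ hL] at hβ2
    linarith
  have hvar := inner_add_sub_nonneg_of_isMinOn hconvR hθp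
    (g := β • (gradient f θ + ξ))
    (isMinOn_iff.2 (by simpa only [real_inner_smul_left] using hmin)) hu
  have hsmooth := le_add_inner_gradient_add_sq_of_lipschitz hdiff hlip θ θp
  have hfirst := hconv.add_inner_gradient_le (hdiff θ) u
  have hnoise : β * -⟪ξ, θp - θ⟫ ≤ β ^ 2 * ‖ξ‖ ^ 2 / (2 * (1 - L * β)) +
      (1 - L * β) / 2 * ‖θp - θ‖ ^ 2 :=
    calc β * -⟪ξ, θp - θ⟫ ≤ β * ‖ξ‖ * ‖θp - θ‖ := by
          rw [mul_assoc]
          gcongr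
          exact (neg_le_abs _).trans (abs_real_inner_le_norm _ _)
      _ ≤ _ := by simpa [mul_pow] using mul_le_sq_div_add_mul_sq hLβ (β * ‖ξ‖) ‖θp - θ‖
  set a := u - θ
  set b := θp - θ
  have hab : u - θp = a - b := by simp only [a, b]; abel
  clear_value a b
  have hthree : ‖a‖ ^ 2 = ‖a - b‖ ^ 2 + 2 * ⟪b, a - b⟫ + ‖b‖ ^ 2 := by
    simpa [real_inner_comm] using norm_add_sq_real (a - b) b
  rw [hab, inner_add_left, real_inner_smul_left, inner_add_left, inner_sub_right,
    inner_sub_right] at hvar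
  rw [hab]
  linarith [mul_le_mul_of_nonneg_left hsmooth hβ1.le, mul_le_mul_of_nonneg_left hfirst hβ1.le]

theorem stmt18 {d : ℕ} (f : EuclideanSpace ℝ (Fin d) → ℝ) (L : ℝ) (hL : 0 < L)
    (hconv : ConvexOn ℝ Set.univ f) (hdiff : Differentiable ℝ f)
    (hlip : ∀ x y, ‖gradient f x - gradient f y‖ ≤ L * ‖x - y‖)
    (R : Set (EuclideanSpace ℝ (Fin d)))
    (hne : R.Nonempty) (hcl : IsClosed R) (hconvR : Convex ℝ R)
    (θ : EuclideanSpace ℝ (Fin d)) (hθ : θ ∈ R) (ξ : EuclideanSpace ℝ (Fin d))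
    (β : ℝ) (hβ1 : 0 < β) (hβ2 : β < 1 / L)
    (θp : EuclideanSpace ℝ (Fin d)) (hθp : θp ∈ R)
    (hmin : ∀ z ∈ R,
      β * ⟪gradient f θ + ξ, θp - θ⟫ + (1 / 2) * ‖θp - θ‖ ^ 2 ≤
        β * ⟪gradient f θ + ξ, z - θ⟫ + (1 / 2) * ‖z - θ‖ ^ 2) :
    ∀ u ∈ R,
      β * f θp ≤ β * f u + β * ⟪ξ, u - θ⟫ + (1 / 2) * ‖u - θ‖ ^ 2 -
        (1 / 2) * ‖u - θp‖ ^ 2 + β ^ 2 * ‖ξ‖ ^ 2 / (2 * (1 - L * β)) :=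
  stmt18_general f L hconv hdiff hlip R hconvR θ ξ β hβ1 hβ2 θp hθp hmin
end
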